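/- arXiv:2012.12797 — 2 statements merged into one kernel-verified Lean document; each statement's English description precedes it below -/
import Mathlib

section
/- Let P_t be a generalized Mehler semigroup P_t f(x) = ∫_X f(T_t x + y) μ_t(dy) on C_b(X) mapping C_b(X) into BUC(X) for every t > 0 (μ_t weakly converging to δ_0 as t → 0). Then for every f ∈ BUC(X), lim_{t→0} ‖P_t f − f(T_t ·)‖_∞ = 0. Consequently, the closure of D(L) in C_b(X) equals BUC(X) ∩ {f : lim_{t→0} ‖f(T_t ·) − f‖_∞ = 0}, where L is the generator of P_t. -/
open MeasureTheory Set Filter Topology BoundedContinuousFunction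

section Aux

variable {Y : Type*} [NormedAddCommGroup Y]

/-- cutoff function: `y ↦ min 1 (‖y‖/d)` as a bounded continuous function. -/
noncomputable def cutoffBCF (Y : Type*) [NormedAddCommGroup Y] (d : ℝ) (hd : 0 < d) : Y →ᵇ ℝ :=
  ⟨⟨fun y => min 1 (‖y‖ / d), by fun_prop⟩, 2, by
    intro x y
    have hx0 : 0 ≤ min 1 (‖x‖ / d) := le_min zero_le_one (by positivity)
    have hy0 : 0 ≤ min 1 (‖y‖ / d) := le_min zero_le_one (by positivity)
    have hx1 : min 1 (‖x‖ / d) ≤ 1 := min_le_left _ _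
    have hy1 : min 1 (‖y‖ / d) ≤ 1 := min_le_left _ _
    simp only [ContinuousMap.coe_mk, Real.dist_eq]
    rw [abs_sub_le_iff]
    constructor <;> linarith⟩

lemma cutoffBCF_apply (d : ℝ) (hd : 0 < d) (y : Y) :
    cutoffBCF Y d hd y = min 1 (‖y‖ / d) := rfl

lemma cutoffBCF_zero (d : ℝ) (hd : 0 < d) : cutoffBCF Y d hd 0 = 0 := by
  simp [cutoffBCF_apply]

lemma cutoffBCF_nonneg (d : ℝ) (hd : 0 < d) (y : Y) : 0 ≤ cutoffBCF Y d hd y :=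
  le_min zero_le_one (by positivity)

lemma cutoffBCF_of_le (d : ℝ) (hd : 0 < d) (y : Y) (h : d ≤ ‖y‖) :
    cutoffBCF Y d hd y = 1 := by
  rw [cutoffBCF_apply, min_eq_left]
  rw [le_div_iff₀ hd]; linarith

/-- a uniform limit of uniformly continuous real functions is uniformly continuous -/
lemma uc_of_approx {g : Y → ℝ}
    (h : ∀ ε : ℝ, 0 < ε → ∃ u : Y → ℝ, UniformContinuous u ∧ ∀ x, |g x - u x| ≤ ε) :
    UniformContinuous g := by
  rw [Metric.uniformContinuous_iff]
  intro ε hε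
  obtain ⟨u, hu, happ⟩ := h (ε / 4) (by linarith)
  obtain ⟨δ, hδ, hd⟩ := Metric.uniformContinuous_iff.1 hu (ε / 4) (by linarith)
  refine ⟨δ, hδ, fun {a b} hab => ?_⟩
  have h1 := happ a
  have h2 := happ b
  have h3 : dist (u a) (u b) < ε / 4 := hd hab
  rw [Real.dist_eq] at h3 ⊢
  have := abs_sub_abs_le_abs_sub (g a - u a) (g b - u b)
  have h4 : |g a - g b| ≤ |g a - u a| + |u a - u b| + |u b - g b| := by
    have := abs_sub_le (g a) (u a) (g b)
    have := abs_sub_le (u a) (u b) (g b)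
    calc |g a - g b| ≤ |g a - u a| + |u a - g b| := abs_sub_le _ _ _
      _ ≤ |g a - u a| + (|u a - u b| + |u b - g b|) := by
          have := abs_sub_le (u a) (u b) (g b); linarith
      _ = _ := by ring
  have h5 : |u b - g b| = |g b - u b| := abs_sub_comm _ _
  linarith

/-- `∫ u in Ioi a, exp (-l * u) = exp (-l * a) / l` -/
lemma integral_exp_neg_mul_Ioi {l : ℝ} (hl : 0 < l) (a : ℝ) :
    ∫ u in Ioi a, Real.exp (-l * u) = Real.exp (-l * a) / l := by
  have hderiv : ∀ x ∈ Ici a, HasDerivAt (fun u => -Real.exp (-l * u) / l)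
      (Real.exp (-l * x)) x := by
    intro x _
    have h1 : HasDerivAt (fun u : ℝ => -l * u) (-l) x := by
      simpa using (hasDerivAt_id x).const_mul (-l)
    have h2 : HasDerivAt (fun u => Real.exp (-l * u)) (Real.exp (-l * x) * (-l)) x :=
      (Real.hasDerivAt_exp _).comp x h1
    have h3 := (h2.neg).div_const l
    have h4 : -(Real.exp (-l * x) * -l) / l = Real.exp (-l * x) := by
      rw [mul_neg, neg_neg, mul_div_assoc, div_self hl.ne', mul_one]
    rw [h4] at h3
    exact h3
  have htends : Tendsto (fun u => -Real.exp (-l * u) / l) atTop (𝓝 0) := by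
    have : Tendsto (fun u : ℝ => -l * u) atTop atBot :=
      Tendsto.const_mul_atTop_of_neg (neg_neg_iff_pos.2 hl) tendsto_id
    have := (Real.tendsto_exp_atBot.comp this).neg.div_const l
    simpa using this
  have := integral_Ioi_of_hasDerivAt_of_tendsto' hderiv
    (exp_neg_integrableOn_Ioi a hl) htends
  rw [this]
  field_simp
  ring

end Aux

set_option maxHeartbeats 1000000 in
/-- For a generalized Mehler semigroup P_t f(x) = ∫_X f(T_t x + y) μ_t(dy) mapping
C_b(X) into BUC(X) for every t > 0 (μ_t ⇀ δ_0 as t → 0⁺):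
(1) for every f ∈ BUC(X), ‖P_t f − f(T_t ·)‖_∞ → 0 as t → 0⁺;
(2) the closure of D(L) equals BUC(X) ∩ {f : ‖f(T_t ·) − f‖_∞ → 0 as t → 0⁺}. -/
theorem stmt17 (X : Type) [NormedAddCommGroup X] [NormedSpace ℝ X]
    [MeasurableSpace X] [BorelSpace X] [SecondCountableTopology X]
    (T : ℝ → X →L[ℝ] X) (μ : ℝ → Measure X)
    (hprob : ∀ t, IsProbabilityMeasure (μ t))
    (hT0 : T 0 = ContinuousLinearMap.id ℝ X)
    (hTsem : ∀ s t : ℝ, 0 ≤ s → 0 ≤ t → T (s + t) = (T s).comp (T t))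
    (hTcont : ∀ x : X, ContinuousOn (fun t : ℝ => T t x) (Set.Ici 0))
    -- μ_t converges weakly to δ_0 as t → 0⁺
    (hδ : ∀ f : X →ᵇ ℝ,
      Tendsto (fun t : ℝ => ∫ y, f y ∂ μ t) (𝓝[>] (0:ℝ)) (𝓝 (f 0)))
    (P : ℝ → (X →ᵇ ℝ) →L[ℝ] (X →ᵇ ℝ))
    (hMehler : ∀ t : ℝ, 0 ≤ t → ∀ f : X →ᵇ ℝ, ∀ x : X,
      P t f x = ∫ y, f (T t x + y) ∂ μ t)
    (hP0 : P 0 = ContinuousLinearMap.id ℝ (X →ᵇ ℝ))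
    (hsem : ∀ s t : ℝ, 0 ≤ s → 0 ≤ t → P (s + t) = (P s).comp (P t))
    (hbound : ∀ t : ℝ, 0 ≤ t → ‖P t‖ ≤ 1)
    (hcont : ∀ f : X →ᵇ ℝ,
      ContinuousOn (fun p : ℝ × X => P p.1 f p.2) (Set.Ici 0 ×ˢ Set.univ))
    -- P_t maps C_b(X) into BUC(X) for every t > 0
    (hsmooth : ∀ t : ℝ, 0 < t → ∀ f : X →ᵇ ℝ, UniformContinuous (P t f))
    (D : Set (X →ᵇ ℝ)) (L : (X →ᵇ ℝ) → (X →ᵇ ℝ))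
    (R : ℝ → (X →ᵇ ℝ) →L[ℝ] (X →ᵇ ℝ))
    (hR : ∀ l : ℝ, 0 < l → ∀ f : X →ᵇ ℝ, ∀ x : X,
      R l f x = ∫ t in Set.Ioi (0:ℝ), Real.exp (-l * t) * P t f x)
    (hRD : ∀ l : ℝ, 0 < l → ∀ f : X →ᵇ ℝ, R l f ∈ D ∧ l • R l f - L (R l f) = f)
    (hLR : ∀ l : ℝ, 0 < l → ∀ g ∈ D, R l (l • g - L g) = g) :
    (∀ f : X →ᵇ ℝ, UniformContinuous f →
      ∀ ε : ℝ, 0 < ε → ∃ δ : ℝ, 0 < δ ∧ ∀ t : ℝ, 0 < t → t < δ →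
        ∀ x : X, |P t f x - f (T t x)| ≤ ε) ∧
    closure D = {f : X →ᵇ ℝ | UniformContinuous f ∧
      ∀ ε : ℝ, 0 < ε → ∃ δ : ℝ, 0 < δ ∧ ∀ t : ℝ, 0 < t → t < δ →
        ∀ x : X, |f (T t x) - f x| ≤ ε} := by
  have hprob' := hprob
  -- pointwise bound on P t f
  have hPb : ∀ t : ℝ, 0 ≤ t → ∀ (f : X →ᵇ ℝ) (x : X), |P t f x| ≤ ‖f‖ := by
    intro t ht f x
    calc |P t f x| = ‖P t f x‖ := (Real.norm_eq_abs _).symm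
      _ ≤ ‖P t f‖ := (P t f).norm_coe_le_norm x
      _ ≤ ‖P t‖ * ‖f‖ := (P t).le_opNorm f
      _ ≤ 1 * ‖f‖ := by
          have := hbound t ht
          have : (0:ℝ) ≤ ‖f‖ := norm_nonneg f
          nlinarith [hbound t ht, norm_nonneg (P t)]
      _ = ‖f‖ := one_mul _
  -- concentration of μ t near 0
  have hconc : ∀ d : ℝ, ∀ hd : 0 < d, ∀ ε : ℝ, 0 < ε → ∃ δ : ℝ, 0 < δ ∧
      ∀ t : ℝ, 0 < t → t < δ → ∫ y, cutoffBCF X d hd y ∂ μ t ≤ ε := by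
    intro d hd ε hε
    have h := hδ (cutoffBCF X d hd)
    rw [cutoffBCF_zero] at h
    have hmem : (fun t : ℝ => ∫ y, cutoffBCF X d hd y ∂ μ t) ⁻¹' Iio ε ∈ 𝓝[>] (0:ℝ) :=
      h (Iio_mem_nhds hε)
    obtain ⟨r, hr, hsub⟩ := Metric.mem_nhdsWithin_iff.1 hmem
    refine ⟨r, hr, fun t ht htr => ?_⟩
    have : t ∈ Metric.ball (0:ℝ) r ∩ Ioi 0 := by
      constructor
      · rw [Metric.mem_ball, Real.dist_eq, sub_zero, abs_of_pos ht]; exact htr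
      · exact ht
    exact (hsub this).le
  -- Part (1)
  have key1 : ∀ f : X →ᵇ ℝ, UniformContinuous f →
      ∀ ε : ℝ, 0 < ε → ∃ δ : ℝ, 0 < δ ∧ ∀ t : ℝ, 0 < t → t < δ →
        ∀ x : X, |P t f x - f (T t x)| ≤ ε := by
    intro f hf ε hε
    obtain ⟨d, hd, hfd⟩ := Metric.uniformContinuous_iff.1 hf (ε/2) (by linarith)
    obtain ⟨δ, hδ', hδc⟩ := hconc d hd (ε/(2*(2*‖f‖+1))) (by positivity)
    refine ⟨δ, hδ', fun t ht htδ x => ?_⟩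
    set z := T t x with hz
    have hMe := hMehler t ht.le f x
    have hF : Integrable (fun y => f (z + y)) (μ t) := by
      have h := (f.compContinuous ⟨fun y => z + y, continuous_const.add continuous_id⟩).integrable (μ t)
      simpa only [coe_compContinuous, ContinuousMap.coe_mk, Function.comp_def] using h
    have heq : P t f x - f z = ∫ y, (f (z + y) - f z) ∂ μ t := by
      rw [hMe, integral_sub hF (integrable_const _), integral_const]
      simp [hz]
    have hpt : ∀ y, |f (z + y) - f z| ≤ ε/2 + (2*‖f‖) * cutoffBCF X d hd y := by
      intro y
      have h3 : |f (z+y) - f z| ≤ |f (z+y)| + |f z| := by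
        simpa [sub_eq_add_neg, abs_neg] using abs_add_le (f (z+y)) (-(f z))
      have h0 := cutoffBCF_nonneg (Y := X) d hd y
      rcases lt_or_ge ‖y‖ d with h | h
      · have hdist : dist (z + y) z < d := by
          rw [dist_eq_norm]; simpa using h
        have h4 := hfd hdist
        rw [Real.dist_eq] at h4
        nlinarith [norm_nonneg f]
      · rw [cutoffBCF_of_le d hd y h]
        have h1 : |f (z+y)| ≤ ‖f‖ := by
          rw [← Real.norm_eq_abs]; exact f.norm_coe_le_norm _
        have h2 : |f z| ≤ ‖f‖ := by
          rw [← Real.norm_eq_abs]; exact f.norm_coe_le_norm _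
        linarith
    have hInt1 : Integrable (fun y => |f (z + y) - f z|) (μ t) :=
      (hF.sub (integrable_const _)).abs
    have hIntc : Integrable (fun y => (cutoffBCF X d hd) y) (μ t) :=
      (cutoffBCF X d hd).integrable (μ t)
    have hInt2 : Integrable (fun y => ε/2 + (2*‖f‖) * cutoffBCF X d hd y) (μ t) :=
      (integrable_const _).add (hIntc.const_mul _)
    calc |P t f x - f z| = |∫ y, (f (z + y) - f z) ∂ μ t| := by rw [heq]
      _ ≤ ∫ y, |f (z + y) - f z| ∂ μ t := by
          simpa [Real.norm_eq_abs] using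
            norm_integral_le_integral_norm (fun y => f (z + y) - f z) (μ := μ t)
      _ ≤ ∫ y, (ε/2 + (2*‖f‖) * cutoffBCF X d hd y) ∂ μ t :=
          integral_mono hInt1 hInt2 hpt
      _ = ε/2 + (2*‖f‖) * ∫ y, cutoffBCF X d hd y ∂ μ t := by
          rw [integral_add (integrable_const _) (hIntc.const_mul _), integral_const,
            integral_const_mul]
          simp
      _ ≤ ε := by
          have hc := hδc t ht htδ
          have hcnn : 0 ≤ ∫ y, cutoffBCF X d hd y ∂ μ t :=
            integral_nonneg (cutoffBCF_nonneg d hd)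
          have hfn : (0:ℝ) ≤ ‖f‖ := norm_nonneg f
          have key : (2*‖f‖) * (∫ y, cutoffBCF X d hd y ∂ μ t) ≤ ε/2 := by
            calc (2*‖f‖) * (∫ y, cutoffBCF X d hd y ∂ μ t)
                ≤ (2*‖f‖) * (ε/(2*(2*‖f‖+1))) := by nlinarith
              _ ≤ ε/2 := by
                  have hpos : (0:ℝ) < 2*(2*‖f‖+1) := by positivity
                  have heq2 : 2*‖f‖*(ε/(2*(2*‖f‖+1))) = ε * (2*‖f‖) / (2*(2*‖f‖+1)) := by
                    ring
                  rw [heq2, div_le_div_iff₀ hpos two_pos]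
                  nlinarith
          linarith
  -- measurability of t ↦ P (a + t) f x on Ioi 0
  have hmeasP : ∀ a : ℝ, 0 ≤ a → ∀ (f : X →ᵇ ℝ) (x : X),
      AEStronglyMeasurable (fun t => P (a + t) f x) (volume.restrict (Ioi 0)) := by
    intro a ha f x
    have hc : ContinuousOn (fun t : ℝ => P (a + t) f x) (Ioi 0) := by
      have hmap : MapsTo (fun t : ℝ => ((a + t : ℝ), x)) (Ioi (0:ℝ)) (Ici (0:ℝ) ×ˢ univ) := by
        intro t ht
        exact ⟨by simp [mem_Ici]; linarith [mem_Ioi.1 ht], mem_univ x⟩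
      exact (hcont f).comp ((continuous_const.add continuous_id).prodMk
        continuous_const).continuousOn hmap
    exact hc.aestronglyMeasurable measurableSet_Ioi
  -- integrability of t ↦ exp (-l t) * P (a + t) f x on Ioi 0
  have hintP : ∀ l : ℝ, 0 < l → ∀ a : ℝ, 0 ≤ a → ∀ (f : X →ᵇ ℝ) (x : X),
      IntegrableOn (fun t => Real.exp (-l * t) * P (a + t) f x) (Ioi 0) := by
    intro l hl a ha f x
    refine Integrable.mono' ((exp_neg_integrableOn_Ioi 0 hl).mul_const ‖f‖)
      ((Real.continuous_exp.comp (continuous_const.mul continuous_id)).aestronglyMeasurable.mul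
        (hmeasP a ha f x)) ?_
    filter_upwards [ae_restrict_mem measurableSet_Ioi] with t ht
    have h1 : |P (a + t) f x| ≤ ‖f‖ := hPb (a + t) (by linarith [mem_Ioi.1 ht]) f x
    have h2 : (0:ℝ) < Real.exp (-l * t) := Real.exp_pos _
    rw [Real.norm_eq_abs, abs_mul, abs_of_pos h2]
    exact mul_le_mul_of_nonneg_left h1 h2.le
  have hintP0 : ∀ l : ℝ, 0 < l → ∀ (f : X →ᵇ ℝ) (x : X),
      IntegrableOn (fun t => Real.exp (-l * t) * P t f x) (Ioi 0) := by
    intro l hl f x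
    simpa using hintP l hl 0 le_rfl f x
  -- Fubini: P s (R l f) x = ∫ t in Ioi 0, exp (-l t) * P (s + t) f x
  have hfub : ∀ l : ℝ, 0 < l → ∀ s : ℝ, 0 ≤ s → ∀ (f : X →ᵇ ℝ) (x : X),
      P s (R l f) x = ∫ t in Ioi 0, Real.exp (-l * t) * P (s + t) f x := by
    intro l hl s hs f x
    have hrep : ∀ y : X, (R l f) (T s x + y)
        = ∫ t in Ioi 0, Real.exp (-l*t) * P t f (T s x + y) :=
      fun y => hR l hl f (T s x + y)
    set F : X → ℝ → ℝ := fun y t => Real.exp (-l*t) * P t f (T s x + y) with hFdef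
    have hprodeq : (μ s).prod (volume.restrict (Ioi (0:ℝ))) =
        ((μ s).prod volume).restrict (univ ×ˢ Ioi (0:ℝ)) := by
      rw [← Measure.prod_restrict, Measure.restrict_univ]
    have hms : MeasurableSet (univ ×ˢ Ioi (0:ℝ) : Set (X × ℝ)) :=
      MeasurableSet.univ.prod measurableSet_Ioi
    have hFint : Integrable (Function.uncurry F) ((μ s).prod (volume.restrict (Ioi (0:ℝ)))) := by
      have hcF : ContinuousOn (Function.uncurry F) (univ ×ˢ Ioi (0:ℝ)) := by
        have h1 : Continuous fun p : X × ℝ => Real.exp (-l * p.2) :=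
          Real.continuous_exp.comp (continuous_const.mul continuous_snd)
        have h2 : ContinuousOn (fun p : X × ℝ => P p.2 f (T s x + p.1)) (univ ×ˢ Ioi (0:ℝ)) := by
          have hmap : MapsTo (fun p : X × ℝ => (p.2, T s x + p.1)) (univ ×ˢ Ioi (0:ℝ))
              (Ici (0:ℝ) ×ˢ univ) := by
            intro p hp
            exact ⟨mem_Ici.2 (le_of_lt hp.2), mem_univ _⟩
          exact (hcont f).comp (Continuous.continuousOn
            (continuous_snd.prodMk (continuous_const.add continuous_fst))) hmap
        exact h1.continuousOn.mul h2
      have hFm : AEStronglyMeasurable (Function.uncurry F)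
          ((μ s).prod (volume.restrict (Ioi (0:ℝ)))) := by
        rw [hprodeq]
        exact hcF.aestronglyMeasurable hms
      refine Integrable.mono' (g := fun p : X × ℝ => ‖f‖ * Real.exp (-l * p.2))
        (Integrable.mul_prod (integrable_const _) (exp_neg_integrableOn_Ioi 0 hl)) hFm ?_
      rw [hprodeq]
      rw [ae_restrict_iff' hms]
      filter_upwards with p hp
      have hp2 : (0:ℝ) < p.2 := hp.2
      have h1 : |P p.2 f (T s x + p.1)| ≤ ‖f‖ := hPb p.2 hp2.le f _
      have h2 : (0:ℝ) < Real.exp (-l * p.2) := Real.exp_pos _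
      rw [Real.norm_eq_abs]
      calc |Function.uncurry F p|
          = Real.exp (-l*p.2) * |P p.2 f (T s x + p.1)| := by
            rw [hFdef]
            simp only [Function.uncurry]
            rw [abs_mul, abs_of_pos h2]
        _ ≤ Real.exp (-l*p.2) * ‖f‖ := mul_le_mul_of_nonneg_left h1 h2.le
        _ = ‖f‖ * Real.exp (-l*p.2) := mul_comm _ _
    calc P s (R l f) x = ∫ y, (R l f) (T s x + y) ∂ μ s := hMehler s hs (R l f) x
      _ = ∫ y, (∫ t in Ioi 0, Real.exp (-l*t) * P t f (T s x + y)) ∂ μ s :=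
          integral_congr_ae (Eventually.of_forall hrep)
      _ = ∫ t in Ioi 0, (∫ y, Real.exp (-l*t) * P t f (T s x + y) ∂ μ s) :=
          integral_integral_swap hFint
      _ = ∫ t in Ioi 0, Real.exp (-l * t) * P (s + t) f x := by
          refine setIntegral_congr_fun measurableSet_Ioi fun t ht => ?_
          rw [integral_const_mul]
          rw [hsem s t hs (le_of_lt ht)]
          simp only [ContinuousLinearMap.coe_comp', Function.comp_apply]
          rw [hMehler s hs (P t f) x]
  -- shifted representation
  have hshift : ∀ l : ℝ, 0 < l → ∀ s : ℝ, 0 ≤ s → ∀ (f : X →ᵇ ℝ) (x : X),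
      ∫ u in Ioi s, Real.exp (-l * u) * P u f x = Real.exp (-l * s) * P s (R l f) x := by
    intro l hl s hs f x
    have hemb : MeasurableEmbedding (fun t : ℝ => t + s) := measurableEmbedding_addRight s
    have hmap : Measure.map (fun t : ℝ => t + s) volume = volume :=
      map_add_right_eq_self volume s
    have hpre : (fun t : ℝ => t + s) ⁻¹' (Ioi s) = Ioi 0 := by
      ext t; simp [mem_preimage, mem_Ioi]
    calc ∫ u in Ioi s, Real.exp (-l*u) * P u f x
        = ∫ u in Ioi s, Real.exp (-l*u) * P u f x
            ∂(Measure.map (fun t : ℝ => t + s) volume) := by rw [hmap]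
      _ = ∫ t in (fun t : ℝ => t + s) ⁻¹' (Ioi s), Real.exp (-l*(t+s)) * P (t+s) f x :=
          hemb.setIntegral_map _ _
      _ = ∫ t in Ioi 0, Real.exp (-l*(t+s)) * P (t+s) f x := by rw [hpre]
      _ = ∫ t in Ioi 0, Real.exp (-l*s) * (Real.exp (-l*t) * P (s+t) f x) := by
          refine setIntegral_congr_fun measurableSet_Ioi fun t ht => ?_
          rw [add_comm t s, ← mul_assoc, ← Real.exp_add]
          ring_nf
      _ = Real.exp (-l*s) * ∫ t in Ioi 0, Real.exp (-l*t) * P (s+t) f x :=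
          integral_const_mul _ _
      _ = Real.exp (-l*s) * P s (R l f) x := by rw [← hfub l hl s hs f x]
  -- uniform continuity of R l f
  have hUCR : ∀ l : ℝ, 0 < l → ∀ f : X →ᵇ ℝ, UniformContinuous (R l f) := by
    intro l hl f
    apply uc_of_approx
    intro ε hε
    set τ := ε / (‖f‖ + 1) with hτdef
    have hτpos : 0 < τ := by positivity
    refine ⟨fun x => Real.exp (-l*τ) * P τ (R l f) x, ?_, ?_⟩
    · exact (hsmooth τ hτpos (R l f)).const_smul (Real.exp (-l*τ))
    · intro x
      have hsplit : R l f x = (∫ t in Ioc 0 τ, Real.exp (-l*t) * P t f x)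
          + ∫ t in Ioi τ, Real.exp (-l*t) * P t f x := by
        rw [hR l hl f x, ← setIntegral_union (Ioc_disjoint_Ioi le_rfl) measurableSet_Ioi
          ((hintP0 l hl f x).mono_set Ioc_subset_Ioi_self)
          ((hintP0 l hl f x).mono_set (Ioi_subset_Ioi hτpos.le)),
          Ioc_union_Ioi_eq_Ioi hτpos.le]
      have htail : ∫ t in Ioi τ, Real.exp (-l*t) * P t f x
          = Real.exp (-l*τ) * P τ (R l f) x := hshift l hl τ hτpos.le f x
      have hhead : |∫ t in Ioc 0 τ, Real.exp (-l*t) * P t f x| ≤ ‖f‖ * τ := by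
        have hb : ∀ t ∈ Ioc (0:ℝ) τ, ‖Real.exp (-l*t) * P t f x‖ ≤ ‖f‖ := by
          intro t ht
          have ht1 : (0:ℝ) < t := ht.1
          have he : Real.exp (-l*t) ≤ 1 := by
            rw [Real.exp_le_one_iff]
            nlinarith
          have hp := hPb t ht1.le f x
          rw [Real.norm_eq_abs, abs_mul, abs_of_pos (Real.exp_pos _)]
          calc Real.exp (-l*t) * |P t f x| ≤ 1 * ‖f‖ := by
                apply mul_le_mul he hp (abs_nonneg _) zero_le_one
            _ = ‖f‖ := one_mul _
        have := norm_setIntegral_le_of_norm_le_const (μ := volume) (s := Ioc 0 τ)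
          (f := fun t => Real.exp (-l*t) * P t f x) measure_Ioc_lt_top hb
        rw [Real.norm_eq_abs] at this
        calc |∫ t in Ioc 0 τ, Real.exp (-l*t) * P t f x| ≤ ‖f‖ * (volume (Ioc 0 τ)).toReal :=
              this
          _ = ‖f‖ * τ := by
              rw [Real.volume_Ioc]
              rw [ENNReal.toReal_ofReal (by linarith)]
              ring_nf
      have hfin : ‖f‖ * τ ≤ ε := by
        rw [hτdef, mul_div_assoc']
        rw [div_le_iff₀ (by positivity)]
        nlinarith [norm_nonneg f]
      calc |R l f x - Real.exp (-l*τ) * P τ (R l f) x|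
          = |∫ t in Ioc 0 τ, Real.exp (-l*t) * P t f x| := by
            rw [hsplit, htail, add_sub_cancel_right]
        _ ≤ ‖f‖ * τ := hhead
        _ ≤ ε := hfin
  -- semigroup difference bound
  have hsgdiff : ∀ l : ℝ, 0 < l → ∀ s : ℝ, 0 ≤ s → ∀ (f : X →ᵇ ℝ) (x : X),
      |P s (R l f) x - R l f x| ≤ 2 * s * ‖f‖ := by
    intro l hl s hs f x
    rcases eq_or_lt_of_le hs with heq | hspos
    · rw [← heq, hP0]
      simp [norm_nonneg]
    · set A := ∫ u in Ioi s, Real.exp (-l*u) * P u f x with hA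
      set B := ∫ u in Ioc 0 s, Real.exp (-l*u) * P u f x with hB
      have hsplit : R l f x = B + A := by
        rw [hR l hl f x, hA, hB, ← setIntegral_union (Ioc_disjoint_Ioi le_rfl) measurableSet_Ioi
          ((hintP0 l hl f x).mono_set Ioc_subset_Ioi_self)
          ((hintP0 l hl f x).mono_set (Ioi_subset_Ioi hspos.le)),
          Ioc_union_Ioi_eq_Ioi hspos.le]
      have hPs : P s (R l f) x = Real.exp (l*s) * A := by
        have h := hshift l hl s hs f x
        rw [hA, h, ← mul_assoc, ← Real.exp_add]
        ring_nf
        rw [Real.exp_zero, one_mul]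
      have hAbound : |A| ≤ ‖f‖ * (Real.exp (-l*s)/l) := by
        have h1 : |A| ≤ ∫ u in Ioi s, |Real.exp (-l*u) * P u f x| := by
          rw [hA]
          simpa only [Real.norm_eq_abs] using
            norm_integral_le_integral_norm (fun u => Real.exp (-l*u) * P u f x)
              (μ := volume.restrict (Ioi s))
        have h2 : ∫ u in Ioi s, |Real.exp (-l*u) * P u f x|
            ≤ ∫ u in Ioi s, Real.exp (-l*u) * ‖f‖ := by
          refine setIntegral_mono_on
            (((hintP0 l hl f x).mono_set (Ioi_subset_Ioi hspos.le)).abs)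
            ((exp_neg_integrableOn_Ioi s hl).mul_const _) measurableSet_Ioi
            (fun u hu => ?_)
          have hu0 : (0:ℝ) < u := lt_trans hspos hu
          rw [abs_mul, abs_of_pos (Real.exp_pos _)]
          exact mul_le_mul_of_nonneg_left (hPb u hu0.le f x) (Real.exp_pos _).le
        have h3 : ∫ u in Ioi s, Real.exp (-l*u) * ‖f‖ = ‖f‖ * (Real.exp (-l*s)/l) := by
          rw [integral_mul_const, integral_exp_neg_mul_Ioi hl s]
          ring
        linarith
      have hBbound : |B| ≤ ‖f‖ * s := by
        have hb : ∀ u ∈ Ioc (0:ℝ) s, ‖Real.exp (-l*u) * P u f x‖ ≤ ‖f‖ := by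
          intro u hu
          have hu1 : (0:ℝ) < u := hu.1
          have he : Real.exp (-l*u) ≤ 1 := by
            rw [Real.exp_le_one_iff]; nlinarith
          rw [Real.norm_eq_abs, abs_mul, abs_of_pos (Real.exp_pos _)]
          calc Real.exp (-l*u) * |P u f x| ≤ 1 * ‖f‖ :=
                mul_le_mul he (hPb u hu1.le f x) (abs_nonneg _) zero_le_one
            _ = ‖f‖ := one_mul _
        have := norm_setIntegral_le_of_norm_le_const (μ := volume) (s := Ioc 0 s)
          (f := fun u => Real.exp (-l*u) * P u f x) measure_Ioc_lt_top hb
        rw [Real.norm_eq_abs] at this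
        rw [hB]
        calc |∫ u in Ioc 0 s, Real.exp (-l*u) * P u f x|
            ≤ ‖f‖ * (volume (Ioc 0 s)).toReal := this
          _ = ‖f‖ * s := by
              rw [Real.volume_Ioc, ENNReal.toReal_ofReal (by linarith)]
              ring_nf
      have hdiff : P s (R l f) x - R l f x = (Real.exp (l*s) - 1) * A - B := by
        rw [hPs, hsplit]; ring
      rw [hdiff]
      have he1 : (1:ℝ) ≤ Real.exp (l*s) := Real.one_le_exp (by positivity)
      have htri : |(Real.exp (l*s) - 1) * A - B| ≤ (Real.exp (l*s) - 1) * |A| + |B| := by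
        calc |(Real.exp (l*s) - 1) * A - B| ≤ |(Real.exp (l*s) - 1) * A| + |B| := by
              simpa [sub_eq_add_neg, abs_neg] using abs_add_le ((Real.exp (l*s) - 1) * A) (-B)
          _ = (Real.exp (l*s) - 1) * |A| + |B| := by
              rw [abs_mul, abs_of_nonneg (by linarith)]
      have hexps : Real.exp (l*s) * Real.exp (-l*s) = 1 := by
        rw [← Real.exp_add]; ring_nf; exact Real.exp_zero
      have hkey : (Real.exp (l*s) - 1) * (‖f‖ * (Real.exp (-l*s)/l)) ≤ s * ‖f‖ := by
        have h3 := Real.add_one_le_exp (-(l*s))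
        have h4 : (Real.exp (l*s) - 1) * Real.exp (-l*s) = 1 - Real.exp (-l*s) := by
          rw [sub_mul, hexps, one_mul]
        have h5 : 1 - Real.exp (-l*s) ≤ l * s := by
          have : -(l*s) + 1 ≤ Real.exp (-(l*s)) := h3
          have heq5 : Real.exp (-(l*s)) = Real.exp (-l*s) := by ring_nf
          linarith [heq5 ▸ this]
        have h6 : (Real.exp (l*s) - 1) * (‖f‖ * (Real.exp (-l*s)/l))
            = ((Real.exp (l*s) - 1) * Real.exp (-l*s)) * ‖f‖ / l := by ring
        rw [h6, h4]
        rw [div_le_iff₀ hl]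
        nlinarith [norm_nonneg f]
      have hAmul : (Real.exp (l*s) - 1) * |A| ≤ s * ‖f‖ := by
        calc (Real.exp (l*s) - 1) * |A| ≤ (Real.exp (l*s) - 1) * (‖f‖ * (Real.exp (-l*s)/l)) :=
              mul_le_mul_of_nonneg_left hAbound (by linarith)
          _ ≤ s * ‖f‖ := hkey
      calc |(Real.exp (l*s) - 1) * A - B| ≤ (Real.exp (l*s) - 1) * |A| + |B| := htri
        _ ≤ s * ‖f‖ + ‖f‖ * s := by linarith
        _ = 2 * s * ‖f‖ := by ring
  -- R l f satisfies the shift condition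
  have hRshift : ∀ l : ℝ, 0 < l → ∀ f : X →ᵇ ℝ, ∀ ε : ℝ, 0 < ε →
      ∃ δ : ℝ, 0 < δ ∧ ∀ s : ℝ, 0 < s → s < δ →
        ∀ x : X, |R l f (T s x) - R l f x| ≤ ε := by
    intro l hl f ε hε
    obtain ⟨δ₁, hδ₁, h1⟩ := key1 (R l f) (hUCR l hl f) (ε/2) (by linarith)
    set δ₂ := ε / (4*‖f‖ + 1) with hδ₂def
    have hδ₂pos : 0 < δ₂ := by positivity
    refine ⟨min δ₁ δ₂, lt_min hδ₁ hδ₂pos, fun s hs hsδ x => ?_⟩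
    have hA := h1 s hs (lt_of_lt_of_le hsδ (min_le_left _ _)) x
    have hBd := hsgdiff l hl s hs.le f x
    have htri : |R l f (T s x) - R l f x|
        ≤ |R l f (T s x) - P s (R l f) x| + |P s (R l f) x - R l f x| :=
      abs_sub_le _ _ _
    have hcomm : |R l f (T s x) - P s (R l f) x| = |P s (R l f) x - R l f (T s x)| :=
      abs_sub_comm _ _
    have hsδ₂ : s < δ₂ := lt_of_lt_of_le hsδ (min_le_right _ _)
    have hsmall : 2*s*‖f‖ ≤ ε/2 := by
      have hc : (0:ℝ) < 4*‖f‖+1 := by positivity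
      have := (lt_div_iff₀ hc).1 (hδ₂def ▸ hsδ₂)
      nlinarith [norm_nonneg f, hs]
    linarith
  refine ⟨key1, ?_⟩
  ext f
  simp only [Set.mem_setOf_eq]
  constructor
  · -- closure D ⊆ RHS
    intro hfc
    have happrox : ∀ ε : ℝ, 0 < ε → ∃ g ∈ D, dist f g < ε :=
      fun ε hε => Metric.mem_closure_iff.1 hfc ε hε
    have hDmem : ∀ g ∈ D, UniformContinuous ⇑g ∧ ∀ ε : ℝ, 0 < ε →
        ∃ δ : ℝ, 0 < δ ∧ ∀ s : ℝ, 0 < s → s < δ → ∀ x : X, |g (T s x) - g x| ≤ ε := by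
      intro g hg
      have hgeq := hLR 1 one_pos g hg
      constructor
      · have := hUCR 1 one_pos ((1:ℝ) • g - L g)
        rwa [hgeq] at this
      · intro ε hε
        obtain ⟨δ, hδ', h⟩ := hRshift 1 one_pos ((1:ℝ) • g - L g) ε hε
        refine ⟨δ, hδ', fun s hs hsδ x => ?_⟩
        have := h s hs hsδ x
        rwa [hgeq] at this
    constructor
    · apply uc_of_approx
      intro ε hε
      obtain ⟨g, hgD, hdist⟩ := happrox ε hε
      refine ⟨g, (hDmem g hgD).1, fun x => ?_⟩
      have := BoundedContinuousFunction.dist_coe_le_dist (f := f) (g := g) x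
      rw [Real.dist_eq] at this
      linarith
    · intro ε hε
      obtain ⟨g, hgD, hdist⟩ := happrox (ε/3) (by linarith)
      obtain ⟨δ, hδ', h⟩ := (hDmem g hgD).2 (ε/3) (by linarith)
      refine ⟨δ, hδ', fun s hs hsδ x => ?_⟩
      have h1 : |f (T s x) - g (T s x)| ≤ ε/3 := by
        have := BoundedContinuousFunction.dist_coe_le_dist (f := f) (g := g) (T s x)
        rw [Real.dist_eq] at this
        linarith
      have h2 := h s hs hsδ x
      have h3 : |g x - f x| ≤ ε/3 := by
        have := BoundedContinuousFunction.dist_coe_le_dist (f := f) (g := g) x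
        rw [Real.dist_eq, abs_sub_comm] at this
        linarith
      calc |f (T s x) - f x|
          ≤ |f (T s x) - g (T s x)| + |g (T s x) - f x| := abs_sub_le _ _ _
        _ ≤ |f (T s x) - g (T s x)| + (|g (T s x) - g x| + |g x - f x|) := by
            linarith [abs_sub_le (g (T s x)) (g x) (f x)]
        _ ≤ ε/3 + (ε/3 + ε/3) := by linarith
        _ = ε := by ring
  · -- RHS ⊆ closure D
    rintro ⟨hfUC, hfshift⟩
    rw [Metric.mem_closure_iff]
    intro ε hε
    obtain ⟨δ₁, hδ₁, h1⟩ := key1 f hfUC (ε/8) (by linarith)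
    obtain ⟨δ₂, hδ₂, h2⟩ := hfshift (ε/8) (by linarith)
    set δ := min δ₁ δ₂ with hδdef
    have hδpos : 0 < δ := lt_min hδ₁ hδ₂
    have hδ2pos : 0 < δ/2 := by linarith
    have htend : Tendsto (fun l : ℝ => Real.exp (-l*(δ/2)) * (2*‖f‖)) atTop (𝓝 0) := by
      have h0 : Tendsto (fun l : ℝ => -l*(δ/2)) atTop atBot := by
        have heq0 : (fun l : ℝ => -l*(δ/2)) = fun l : ℝ => (-(δ/2)) * l := by
          funext l; ring
        rw [heq0]
        exact Tendsto.const_mul_atTop_of_neg (by linarith) tendsto_id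
      have := (Real.tendsto_exp_atBot.comp h0).mul_const (2*‖f‖)
      simpa using this
    obtain ⟨l, hl0, hlexp⟩ : ∃ l : ℝ, 0 < l ∧ Real.exp (-l*(δ/2)) * (2*‖f‖) < ε/8 := by
      have hev := htend.eventually_lt_const (show (0:ℝ) < ε/8 by linarith)
      obtain ⟨l, hl1, hl2⟩ := (hev.and (eventually_gt_atTop 0)).exists
      exact ⟨l, hl2, hl1⟩
    have hbnd : ∀ x : X, |f x - (l • R l f) x| ≤ ε/2 := by
      intro x
      have hint := hintP0 l hl0 f x
      have hexpfx : IntegrableOn (fun t => Real.exp (-l*t) * f x) (Ioi (0:ℝ)) :=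
        (exp_neg_integrableOn_Ioi 0 hl0).mul_const (f x)
      have hG' : IntegrableOn (fun t => l * (Real.exp (-l*t) * (f x - P t f x)))
          (Ioi (0:ℝ)) := by
        have h := (hexpfx.sub hint).const_mul l
        have heqf : (fun t => l * (Real.exp (-l*t) * (f x - P t f x)))
            = fun t => l * (Real.exp (-l*t) * f x - Real.exp (-l*t) * P t f x) := by
          funext t; ring
        rw [heqf]; exact h
      have e1 : (l • R l f) x = ∫ t in Ioi 0, l * (Real.exp (-l*t) * P t f x) := by
        calc (l • R l f) x = l * R l f x := by
              simp [BoundedContinuousFunction.coe_smul, smul_eq_mul]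
          _ = l * ∫ t in Ioi 0, Real.exp (-l*t) * P t f x := by rw [hR l hl0 f x]
          _ = ∫ t in Ioi 0, l * (Real.exp (-l*t) * P t f x) := (integral_const_mul l _).symm
      have e2 : f x = ∫ t in Ioi 0, l * (Real.exp (-l*t) * f x) := by
        rw [integral_const_mul, integral_mul_const, integral_exp_neg_mul_Ioi hl0 0]
        rw [show -l*(0:ℝ) = 0 by ring, Real.exp_zero]
        field_simp
      have e3 : f x - (l • R l f) x
          = ∫ t in Ioi 0, l * (Real.exp (-l*t) * (f x - P t f x)) := by
        nth_rewrite 1 [e2]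
        rw [e1, ← integral_sub ((hexpfx.const_mul l)) (hint.const_mul l)]
        congr 1; funext t; ring
      have hsplit : ∫ t in Ioi 0, l * (Real.exp (-l*t) * (f x - P t f x))
          = (∫ t in Ioc 0 (δ/2), l * (Real.exp (-l*t) * (f x - P t f x)))
            + ∫ t in Ioi (δ/2), l * (Real.exp (-l*t) * (f x - P t f x)) := by
        rw [← setIntegral_union (Ioc_disjoint_Ioi le_rfl) measurableSet_Ioi
          (hG'.mono_set Ioc_subset_Ioi_self) (hG'.mono_set (Ioi_subset_Ioi hδ2pos.le)),
          Ioc_union_Ioi_eq_Ioi hδ2pos.le]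
      have hhead : |∫ t in Ioc 0 (δ/2), l * (Real.exp (-l*t) * (f x - P t f x))| ≤ ε/4 := by
        have hb : ∀ t ∈ Ioc (0:ℝ) (δ/2), |l * (Real.exp (-l*t) * (f x - P t f x))|
            ≤ (ε/4) * (l * Real.exp (-l*t)) := by
          intro t ht
          have ht1 : (0:ℝ) < t := ht.1
          have htδ₁ : t < δ₁ := lt_of_le_of_lt ht.2
            (lt_of_lt_of_le (by linarith) (min_le_left δ₁ δ₂))
          have htδ₂ : t < δ₂ := lt_of_le_of_lt ht.2
            (lt_of_lt_of_le (by linarith) (min_le_right δ₁ δ₂))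
          have hP1 := h1 t ht1 htδ₁ x
          have hP2 := h2 t ht1 htδ₂ x
          have hPf : |f x - P t f x| ≤ ε/4 := by
            rw [abs_sub_comm]
            calc |P t f x - f x| ≤ |P t f x - f (T t x)| + |f (T t x) - f x| :=
                  abs_sub_le _ _ _
              _ ≤ ε/8 + ε/8 := by linarith
              _ = ε/4 := by ring
          calc |l * (Real.exp (-l*t) * (f x - P t f x))|
              = (l * Real.exp (-l*t)) * |f x - P t f x| := by
                rw [abs_mul, abs_mul, abs_of_pos hl0, abs_of_pos (Real.exp_pos _), mul_assoc]
            _ ≤ (l * Real.exp (-l*t)) * (ε/4) :=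
                mul_le_mul_of_nonneg_left hPf (by positivity)
            _ = (ε/4) * (l * Real.exp (-l*t)) := mul_comm _ _
        have habs : |∫ t in Ioc 0 (δ/2), l * (Real.exp (-l*t) * (f x - P t f x))|
            ≤ ∫ t in Ioc 0 (δ/2), |l * (Real.exp (-l*t) * (f x - P t f x))| := by
          simpa only [Real.norm_eq_abs] using
            norm_integral_le_integral_norm
              (fun t => l * (Real.exp (-l*t) * (f x - P t f x)))
              (μ := volume.restrict (Ioc 0 (δ/2)))
        have hmono : ∫ t in Ioc 0 (δ/2), |l * (Real.exp (-l*t) * (f x - P t f x))|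
            ≤ ∫ t in Ioc 0 (δ/2), (ε/4) * (l * Real.exp (-l*t)) :=
          setIntegral_mono_on (hG'.mono_set Ioc_subset_Ioi_self).abs
            (IntegrableOn.mono_set
              (((exp_neg_integrableOn_Ioi 0 hl0).const_mul l).const_mul (ε/4))
              Ioc_subset_Ioi_self) measurableSet_Ioc hb
        have hmono2 : ∫ t in Ioc 0 (δ/2), (ε/4) * (l * Real.exp (-l*t))
            ≤ ∫ t in Ioi 0, (ε/4) * (l * Real.exp (-l*t)) :=
          setIntegral_mono_set
            (((exp_neg_integrableOn_Ioi 0 hl0).const_mul l).const_mul (ε/4))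
            (ae_of_all _ fun t => by positivity)
            (HasSubset.Subset.eventuallyLE Ioc_subset_Ioi_self)
        have hval : ∫ t in Ioi 0, (ε/4) * (l * Real.exp (-l*t)) = ε/4 := by
          rw [integral_const_mul, integral_const_mul, integral_exp_neg_mul_Ioi hl0 0]
          rw [show -l*(0:ℝ) = 0 by ring, Real.exp_zero]
          field_simp
        linarith
      have htail : |∫ t in Ioi (δ/2), l * (Real.exp (-l*t) * (f x - P t f x))| ≤ ε/8 := by
        have hb2 : ∀ t ∈ Ioi (δ/2), |l * (Real.exp (-l*t) * (f x - P t f x))|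
            ≤ (2*‖f‖) * (l * Real.exp (-l*t)) := by
          intro t ht
          have ht1 : (0:ℝ) < t := lt_trans hδ2pos ht
          have hPf : |f x - P t f x| ≤ 2*‖f‖ := by
            have ha := hPb t ht1.le f x
            have hb' : |f x| ≤ ‖f‖ := by
              rw [← Real.norm_eq_abs]; exact f.norm_coe_le_norm _
            calc |f x - P t f x| ≤ |f x| + |P t f x| := by
                  simpa [sub_eq_add_neg, abs_neg] using abs_add_le (f x) (-(P t f x))
              _ ≤ 2*‖f‖ := by linarith
          calc |l * (Real.exp (-l*t) * (f x - P t f x))|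
              = (l * Real.exp (-l*t)) * |f x - P t f x| := by
                rw [abs_mul, abs_mul, abs_of_pos hl0, abs_of_pos (Real.exp_pos _), mul_assoc]
            _ ≤ (l * Real.exp (-l*t)) * (2*‖f‖) :=
                mul_le_mul_of_nonneg_left hPf (by positivity)
            _ = (2*‖f‖) * (l * Real.exp (-l*t)) := mul_comm _ _
        have habs : |∫ t in Ioi (δ/2), l * (Real.exp (-l*t) * (f x - P t f x))|
            ≤ ∫ t in Ioi (δ/2), |l * (Real.exp (-l*t) * (f x - P t f x))| := by
          simpa only [Real.norm_eq_abs] using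
            norm_integral_le_integral_norm
              (fun t => l * (Real.exp (-l*t) * (f x - P t f x)))
              (μ := volume.restrict (Ioi (δ/2)))
        have hmono : ∫ t in Ioi (δ/2), |l * (Real.exp (-l*t) * (f x - P t f x))|
            ≤ ∫ t in Ioi (δ/2), (2*‖f‖) * (l * Real.exp (-l*t)) :=
          setIntegral_mono_on (hG'.mono_set (Ioi_subset_Ioi hδ2pos.le)).abs
            (((exp_neg_integrableOn_Ioi (δ/2) hl0).const_mul l).const_mul (2*‖f‖))
            measurableSet_Ioi hb2
        have hval : ∫ t in Ioi (δ/2), (2*‖f‖) * (l * Real.exp (-l*t))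
            = Real.exp (-l*(δ/2)) * (2*‖f‖) := by
          rw [integral_const_mul, integral_const_mul, integral_exp_neg_mul_Ioi hl0 (δ/2)]
          field_simp
        linarith
      calc |f x - (l • R l f) x|
          = |(∫ t in Ioc 0 (δ/2), l * (Real.exp (-l*t) * (f x - P t f x)))
              + ∫ t in Ioi (δ/2), l * (Real.exp (-l*t) * (f x - P t f x))| := by
            rw [e3, hsplit]
        _ ≤ |∫ t in Ioc 0 (δ/2), l * (Real.exp (-l*t) * (f x - P t f x))|
              + |∫ t in Ioi (δ/2), l * (Real.exp (-l*t) * (f x - P t f x))| := abs_add_le _ _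
        _ ≤ ε/4 + ε/8 := by linarith
        _ ≤ ε/2 := by linarith
    refine ⟨R l (l • f), (hRD l hl0 (l • f)).1, ?_⟩
    have hgR : R l (l • f) = l • R l f := map_smul (R l) l f
    rw [hgR]
    have hdle : dist f (l • R l f) ≤ ε/2 :=
      (BoundedContinuousFunction.dist_le (by linarith)).2 fun x => by
        rw [Real.dist_eq]; exact hbnd x
    linarith
end

section
/- Let μ be a Borel probability measure on a Banach space X that is Fomin differentiable along v ∈ X with Fomin derivative β_v^μ ∈ L^1(X,μ), and let P f(x) = ∫_X f(x + y) μ(dy) for bounded Borel f. Then P f is Lipschitz continuous in the direction v: |P f(x + v) − P f(x)| ≤ ‖f‖_∞ · ‖β_v^μ‖_{L^1(X,μ)} for all x ∈ X. -/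
open MeasureTheory Set

lemma aux_meas_kernel {X : Type} [NormedAddCommGroup X] [NormedSpace ℝ X]
    [MeasurableSpace X] [BorelSpace X] (m : Measure X) [SFinite m] (v : X) :
    Measurable (fun s : ℝ => m.map (fun x => x - s • v)) := by
  apply Measure.measurable_of_measurable_coe
  intro B hB
  have hT : Measurable (fun p : ℝ × X => p.2 - p.1 • v) :=
    (continuous_snd.sub (continuous_fst.smul continuous_const)).measurable
  have hS : MeasurableSet ((fun p : ℝ × X => p.2 - p.1 • v) ⁻¹' B) := hT hB
  have h2 := measurable_measure_prodMk_left (ν := m) hS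
  have heq : ∀ s : ℝ, (m.map (fun x => x - s • v)) B
      = m (Prod.mk s ⁻¹' ((fun p : ℝ × X => p.2 - p.1 • v) ⁻¹' B)) := by
    intro s
    rw [Measure.map_apply (by fun_prop) hB]
    rfl
  simpa [heq] using h2

/-- If a Borel probability measure μ on X is Fomin differentiable along v with
Fomin derivative b = β_v^μ ∈ L¹(X,μ), then P f(x) = ∫ f(x+y) μ(dy) is Lipschitz
in the direction v: |P f(x + v) − P f(x)| ≤ ‖f‖_∞ ‖β_v^μ‖_{L¹(X,μ)}. -/
theorem stmt19 (X : Type) [NormedAddCommGroup X] [NormedSpace ℝ X]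
    [MeasurableSpace X] [BorelSpace X]
    (μ : Measure X) [IsProbabilityMeasure μ]
    (v : X) (b : X → ℝ) (hb : Integrable b μ)
    -- Fomin differentiability: for every Borel set B,
    -- d/dt μ(B + t v)|_{t=0} = ∫_B b dμ
    (hFomin : ∀ B : Set X, MeasurableSet B →
      HasDerivAt (fun t : ℝ => ((μ.map (fun x => x - t • v)) B).toReal)
        (∫ y in B, b y ∂ μ) 0)
    (f : X → ℝ) (Mf : ℝ) (hfm : Measurable f) (hMf : ∀ x, |f x| ≤ Mf) :
    ∀ x : X, |(∫ y, f (x + v + y) ∂ μ) - ∫ y, f (x + y) ∂ μ| ≤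
      Mf * ∫ y, |b y| ∂ μ := by
  classical
  have hbae : AEMeasurable b μ := hb.aestronglyMeasurable.aemeasurable
  set gp : X → ENNReal := fun y => ENNReal.ofReal (b y) with hgp
  set gm : X → ENNReal := fun y => ENNReal.ofReal (-b y) with hgm
  set mp : Measure X := μ.withDensity gp with hmp
  set mm : Measure X := μ.withDensity gm with hmm
  have hmble : ∀ s : ℝ, Measurable (fun x : X => x - s • v) := fun s => by fun_prop
  have hIp : mp univ = ∫⁻ y, gp y ∂μ := by
    rw [hmp, withDensity_apply _ MeasurableSet.univ, Measure.restrict_univ]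
  have hIm : mm univ = ∫⁻ y, gm y ∂μ := by
    rw [hmm, withDensity_apply _ MeasurableSet.univ, Measure.restrict_univ]
  have habsfin : (∫⁻ y, ENNReal.ofReal |b y| ∂μ) < ⊤ := by
    have := hb.2
    rw [hasFiniteIntegral_iff_norm] at this
    simpa [Real.norm_eq_abs] using this
  have hgpfin : (∫⁻ y, gp y ∂μ) < ⊤ :=
    lt_of_le_of_lt (lintegral_mono fun y =>
      ENNReal.ofReal_le_ofReal (le_abs_self _)) habsfin
  have hgmfin : (∫⁻ y, gm y ∂μ) < ⊤ :=
    lt_of_le_of_lt (lintegral_mono fun y =>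
      ENNReal.ofReal_le_ofReal (neg_le_abs _)) habsfin
  have hmpfin : mp univ < ⊤ := by rw [hIp]; exact hgpfin
  have hmmfin : mm univ < ⊤ := by rw [hIm]; exact hgmfin
  haveI : IsFiniteMeasure mp := ⟨hmpfin⟩
  haveI : IsFiniteMeasure mm := ⟨hmmfin⟩
  set κp : ℝ → Measure X := fun s => mp.map (fun x => x - s • v) with hκp
  set κm : ℝ → Measure X := fun s => mm.map (fun x => x - s • v) with hκm
  have hκpm : Measurable κp := aux_meas_kernel mp v
  have hκmm : Measurable κm := aux_meas_kernel mm v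
  set ρp : Measure X := (volume.restrict (Ioc (-1:ℝ) 0)).bind κp with hρp
  set ρm : Measure X := (volume.restrict (Ioc (-1:ℝ) 0)).bind κm with hρm
  have hρp_apply : ∀ B : Set X, MeasurableSet B →
      ρp B = ∫⁻ s in Ioc (-1:ℝ) 0, κp s B := fun B hB => Measure.bind_apply hB hκpm.aemeasurable
  have hρm_apply : ∀ B : Set X, MeasurableSet B →
      ρm B = ∫⁻ s in Ioc (-1:ℝ) 0, κm s B := fun B hB => Measure.bind_apply hB hκmm.aemeasurable
  have hκpuniv : ∀ s : ℝ, κp s univ = mp univ := fun s => by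
    rw [hκp]
    simp only
    rw [Measure.map_apply (hmble s) MeasurableSet.univ, preimage_univ]
  have hκmuniv : ∀ s : ℝ, κm s univ = mm univ := fun s => by
    rw [hκm]
    simp only
    rw [Measure.map_apply (hmble s) MeasurableSet.univ, preimage_univ]
  have hρpuniv : ρp univ = mp univ := by
    rw [hρp_apply univ MeasurableSet.univ]
    simp [hκpuniv, Real.volume_Ioc]
  have hρmuniv : ρm univ = mm univ := by
    rw [hρm_apply univ MeasurableSet.univ]
    simp [hκmuniv, Real.volume_Ioc]
  set ν : Measure X := μ.map (fun x => x - (-1:ℝ) • v) with hν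
  haveI : IsProbabilityMeasure ν := Measure.isProbabilityMeasure_map (hmble (-1)).aemeasurable
  -- the key per-set identity
  have key : ∀ B : Set X, MeasurableSet B → μ B + ρm B = ν B + ρp B := by
    intro B hB
    set g : ℝ → ℝ := fun t => ((μ.map (fun x => x - t • v)) B).toReal with hg
    set φ : ℝ → ℝ := fun s => ∫ y in ((fun x : X => x - s • v) ⁻¹' B), b y ∂μ with hφ
    have hBs : ∀ s : ℝ, MeasurableSet ((fun x : X => x - s • v) ⁻¹' B) :=
      fun s => (hmble s) hB
    have hderiv : ∀ s : ℝ, HasDerivAt g (φ s) s := by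
      intro s
      have hF := hFomin _ (hBs s)
      have hset : ∀ t : ℝ,
          (fun x : X => x - t • v) ⁻¹' ((fun x : X => x - s • v) ⁻¹' B)
            = (fun x : X => x - (s + t) • v) ⁻¹' B := by
        intro t
        ext z
        have : z - t • v - s • v = z - (s + t) • v := by rw [add_smul]; abel
        simp [Set.mem_preimage, this]
      have hcongr : (fun t : ℝ =>
          ((μ.map (fun x => x - t • v)) ((fun x : X => x - s • v) ⁻¹' B)).toReal)
          = fun t : ℝ => g (s + t) := by
        funext t
        rw [hg]
        simp only
        rw [Measure.map_apply (hmble t) (hBs s), Measure.map_apply (hmble (s+t)) hB,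
          hset t]
      rw [hcongr] at hF
      have h1 : HasDerivAt (fun t : ℝ => g (s + t)) (φ s) (-s + s) := by
        rw [neg_add_cancel]; exact hF
      have h2 := h1.comp_const_add (-s) s
      have h3 : (fun x : ℝ => g (s + (-s + x))) = g := by
        funext t; congr 1; ring
      rwa [h3] at h2
    have hφeq : ∀ s : ℝ, φ s = (κp s B).toReal - (κm s B).toReal := by
      intro s
      have h1 : κp s B = ∫⁻ y in ((fun x : X => x - s • v) ⁻¹' B), gp y ∂μ := by
        rw [hκp]
        simp only
        rw [Measure.map_apply (hmble s) hB, hmp, withDensity_apply _ (hBs s)]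
      have h2 : κm s B = ∫⁻ y in ((fun x : X => x - s • v) ⁻¹' B), gm y ∂μ := by
        rw [hκm]
        simp only
        rw [Measure.map_apply (hmble s) hB, hmm, withDensity_apply _ (hBs s)]
      rw [hφ]
      simp only
      rw [integral_eq_lintegral_pos_part_sub_lintegral_neg_part (hb.restrict), h1, h2]
    have hκpB : Measurable fun s : ℝ => κp s B := (Measure.measurable_coe hB).comp hκpm
    have hκmB : Measurable fun s : ℝ => κm s B := (Measure.measurable_coe hB).comp hκmm
    have hκpBle : ∀ s : ℝ, κp s B ≤ mp univ := fun s => by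
      rw [hκp]
      simp only
      rw [Measure.map_apply (hmble s) hB]
      exact measure_mono (subset_univ _)
    have hκmBle : ∀ s : ℝ, κm s B ≤ mm univ := fun s => by
      rw [hκm]
      simp only
      rw [Measure.map_apply (hmble s) hB]
      exact measure_mono (subset_univ _)
    have hintp : IntegrableOn (fun s : ℝ => (κp s B).toReal) (Ioc (-1:ℝ) 0) volume := by
      refine Integrable.mono' (g := fun _ => (mp univ).toReal)
        (integrableOn_const measure_Ioc_lt_top.ne)
        hκpB.ennreal_toReal.aestronglyMeasurable ?_
      filter_upwards with s
      rw [Real.norm_eq_abs, abs_of_nonneg ENNReal.toReal_nonneg]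
      exact ENNReal.toReal_mono hmpfin.ne (hκpBle s)
    have hintm : IntegrableOn (fun s : ℝ => (κm s B).toReal) (Ioc (-1:ℝ) 0) volume := by
      refine Integrable.mono' (g := fun _ => (mm univ).toReal)
        (integrableOn_const measure_Ioc_lt_top.ne)
        hκmB.ennreal_toReal.aestronglyMeasurable ?_
      filter_upwards with s
      rw [Real.norm_eq_abs, abs_of_nonneg ENNReal.toReal_nonneg]
      exact ENNReal.toReal_mono hmmfin.ne (hκmBle s)
    have hφeqf : φ = fun s => (κp s B).toReal - (κm s B).toReal := funext hφeq
    have hφint : IntervalIntegrable φ volume (-1) 0 := by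
      rw [intervalIntegrable_iff_integrableOn_Ioc_of_le (by norm_num : (-1:ℝ) ≤ 0)]
      rw [hφeqf]
      exact hintp.sub hintm
    have hFTC := intervalIntegral.integral_eq_sub_of_hasDerivAt
      (f := g) (f' := φ) (fun t _ => hderiv t) hφint
    rw [intervalIntegral.integral_of_le (by norm_num : (-1:ℝ) ≤ 0)] at hFTC
    have hg0 : g 0 = (μ B).toReal := by
      rw [hg]
      simp only
      have : (fun x : X => x - (0:ℝ) • v) = id := by funext z; simp
      rw [this, Measure.map_id]
    have hg1 : g (-1) = (ν B).toReal := by rw [hg, hν]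
    have hIρp : ∫ s in Ioc (-1:ℝ) 0, (κp s B).toReal = (ρp B).toReal := by
      rw [hρp_apply B hB]
      exact integral_toReal (hκpB.aemeasurable.restrict)
        (Filter.Eventually.of_forall fun s => lt_of_le_of_lt (hκpBle s) hmpfin)
    have hIρm : ∫ s in Ioc (-1:ℝ) 0, (κm s B).toReal = (ρm B).toReal := by
      rw [hρm_apply B hB]
      exact integral_toReal (hκmB.aemeasurable.restrict)
        (Filter.Eventually.of_forall fun s => lt_of_le_of_lt (hκmBle s) hmmfin)
    have hmain : (ρp B).toReal - (ρm B).toReal = (μ B).toReal - (ν B).toReal := by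
      rw [← hIρp, ← hIρm, ← integral_sub hintp hintm, ← hg0, ← hg1, ← hFTC]
      rw [hφeqf]
    have hρpBfin : ρp B ≠ ⊤ :=
      (lt_of_le_of_lt (measure_mono (subset_univ _)) (hρpuniv ▸ hmpfin)).ne
    have hρmBfin : ρm B ≠ ⊤ :=
      (lt_of_le_of_lt (measure_mono (subset_univ _)) (hρmuniv ▸ hmmfin)).ne
    have htr : (μ B + ρm B).toReal = (ν B + ρp B).toReal := by
      rw [ENNReal.toReal_add (measure_ne_top μ B) hρmBfin,
          ENNReal.toReal_add (measure_ne_top ν B) hρpBfin]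
      linarith [hmain]
    exact (ENNReal.toReal_eq_toReal_iff'
      (ENNReal.add_ne_top.2 ⟨measure_ne_top μ B, hρmBfin⟩)
      (ENNReal.add_ne_top.2 ⟨measure_ne_top ν B, hρpBfin⟩)).1 htr
  have hmeq : μ + ρm = ν + ρp := Measure.ext fun B hB => by
    simpa [Measure.add_apply] using key B hB
  haveI : IsFiniteMeasure ρp := ⟨by rw [hρpuniv]; exact hmpfin⟩
  haveI : IsFiniteMeasure ρm := ⟨by rw [hρmuniv]; exact hmmfin⟩
  have hMf0 : 0 ≤ Mf := by
    have h1 : μ univ = 1 := measure_univ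
    rcases isEmpty_or_nonempty X with hX | hX
    · rw [Set.univ_eq_empty_iff.mpr hX] at h1
      simp at h1
    · exact le_trans (abs_nonneg _) (hMf hX.some)
  have hsum : (ρp univ).toReal + (ρm univ).toReal = ∫ y, |b y| ∂μ := by
    rw [hρpuniv, hρmuniv, hIp, hIm]
    have habsint : ∫ y, |b y| ∂μ = (∫⁻ y, ENNReal.ofReal |b y| ∂μ).toReal := by
      rw [integral_eq_lintegral_of_nonneg_ae
        (Filter.Eventually.of_forall fun y => abs_nonneg _)
        hb.abs.aestronglyMeasurable]
    have hsplit : (fun y => ENNReal.ofReal |b y|) = fun y => gp y + gm y := by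
      funext y
      rcases le_total 0 (b y) with hy | hy
      · rw [abs_of_nonneg hy, hgp, hgm]
        simp [ENNReal.ofReal_of_nonpos (neg_nonpos.2 hy)]
      · rw [abs_of_nonpos hy, hgp, hgm]
        simp [ENNReal.ofReal_of_nonpos hy]
    rw [habsint]
    have : (∫⁻ y, ENNReal.ofReal |b y| ∂μ) = (∫⁻ y, gp y ∂μ) + ∫⁻ y, gm y ∂μ := by
      rw [show (fun y => ENNReal.ofReal |b y|) = fun y => gp y + gm y from hsplit]
      exact lintegral_add_left' (ENNReal.measurable_ofReal.comp_aemeasurable hbae) _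
    rw [this, ENNReal.toReal_add hgpfin.ne hgmfin.ne]
  intro x
  set h : X → ℝ := fun y => f (x + y) with hh
  have hhm : Measurable h := hfm.comp (by fun_prop)
  have hint : ∀ (m' : Measure X) [IsFiniteMeasure m'], Integrable h m' := by
    intro m' hm'
    refine Integrable.mono' (integrable_const Mf) hhm.aestronglyMeasurable ?_
    filter_upwards with y
    rw [Real.norm_eq_abs]
    exact hMf _
  have hadd : ∫ y, h y ∂μ + ∫ y, h y ∂ρm = ∫ y, h y ∂ν + ∫ y, h y ∂ρp := by
    rw [← integral_add_measure (hint μ) (hint ρm),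
      ← integral_add_measure (hint ν) (hint ρp), hmeq]
  have hν_int : ∫ y, h y ∂ν = ∫ y, f (x + v + y) ∂μ := by
    rw [hν, integral_map (hmble (-1)).aemeasurable hhm.aestronglyMeasurable]
    congr 1
    funext y
    rw [hh]
    simp only
    congr 1
    rw [neg_smul, one_smul, sub_neg_eq_add]
    abel
  have habs : ∀ (m' : Measure X) [IsFiniteMeasure m'],
      |∫ y, h y ∂m'| ≤ Mf * (m' univ).toReal := by
    intro m' _
    calc |∫ y, h y ∂m'| ≤ ∫ y, |h y| ∂m' := by
          simpa [Real.norm_eq_abs] using norm_integral_le_integral_norm (μ := m') h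
      _ ≤ ∫ _, Mf ∂m' := integral_mono (hint m').abs (integrable_const _) (fun y => hMf _)
      _ = Mf * (m' univ).toReal := by rw [integral_const, smul_eq_mul, mul_comm, measureReal_def]
  have hgoal : ∫ y, f (x + v + y) ∂μ - ∫ y, f (x + y) ∂μ
      = ∫ y, h y ∂ρm - ∫ y, h y ∂ρp := by
    have hμh : ∫ y, f (x + y) ∂μ = ∫ y, h y ∂μ := rfl
    linarith [hadd, hν_int]
  rw [hgoal]
  calc |∫ y, h y ∂ρm - ∫ y, h y ∂ρp| ≤ |∫ y, h y ∂ρm| + |∫ y, h y ∂ρp| := abs_sub _ _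
    _ ≤ Mf * (ρm univ).toReal + Mf * (ρp univ).toReal := add_le_add (habs ρm) (habs ρp)
    _ = Mf * ∫ y, |b y| ∂μ := by rw [← hsum]; ring
end
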